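/- arXiv:1611.04155 — 7 statements merged into one kernel-verified Lean document; each statement's English description precedes it below -/
import Mathlib

section
/- For a finite group G and a subgroup H with maximal Chermak-Delgado measure (i.e. |H||C_G(H)| = max over all subgroups), the centralizer C_G(H) also has maximal Chermak-Delgado measure and C_G(C_G(H)) = H. -/
/-- The Chermak–Delgado measure of a subgroup: `|H| * |C_G(H)|`. -/
noncomputable def chermakDelgadoMeasure {G : Type*} [Group G] (H : Subgroup G) : ℕ :=
  Nat.card H * Nat.card (Subgroup.centralizer (H : Set G))

theorem stmt_0 {G : Type*} [Group G] [Finite G] (H : Subgroup G)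
    (hmax : ∀ K : Subgroup G, chermakDelgadoMeasure K ≤ chermakDelgadoMeasure H) :
    (∀ K : Subgroup G,
        chermakDelgadoMeasure K ≤ chermakDelgadoMeasure (Subgroup.centralizer (H : Set G))) ∧
    Subgroup.centralizer ((Subgroup.centralizer (H : Set G) : Subgroup G) : Set G) = H := by
  set C := Subgroup.centralizer (H : Set G) with hC
  set D := Subgroup.centralizer (C : Set G) with hD
  have hHD : H ≤ D := by
    intro h hh g hg
    exact (hg h hh).symm
  have hcardHD : Nat.card H ≤ Nat.card D := Subgroup.card_le_of_le hHD
  have hCpos : 0 < Nat.card C := Nat.card_pos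
  -- m(C) = |C| * |D| ≥ |C| * |H| = m(H)
  have hmCge : chermakDelgadoMeasure H ≤ chermakDelgadoMeasure C := by
    unfold chermakDelgadoMeasure
    rw [← hD, Nat.mul_comm (Nat.card H)]
    exact Nat.mul_le_mul_left _ hcardHD
  have hmCeq : chermakDelgadoMeasure C = chermakDelgadoMeasure H :=
    le_antisymm (hmax C) hmCge
  have hcardDH : Nat.card D ≤ Nat.card H := by
    have h1 : Nat.card C * Nat.card D = Nat.card C * Nat.card H := by
      have := hmCeq
      unfold chermakDelgadoMeasure at this
      rw [← hD] at this
      rw [this, Nat.mul_comm]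
    exact Nat.le_of_mul_le_mul_left h1.le hCpos
  have hDH : D = H := by
    have hsub : (H : Set G) ⊆ (D : Set G) := hHD
    have hfin : (D : Set G).Finite := Set.toFinite _
    have hcard : (D : Set G).ncard ≤ (H : Set G).ncard := by
      rwa [← Nat.card_coe_set_eq, ← Nat.card_coe_set_eq]
    exact SetLike.coe_injective (Set.eq_of_subset_of_ncard_le hsub hcard hfin).symm
  constructor
  · intro K
    rw [hmCeq]; exact hmax K
  · exact hDH
end

section
/- The center of ZM(m,n,r) is the cyclic subgroup ⟨b^d⟩, where d is the multiplicative order of r modulo m; in particular |Z(ZM(m,n,r))| = n/d. -/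
/-- `ordMod m r` is the multiplicative order of `r` modulo `m`. -/
noncomputable def ordMod (m r : ℕ) : ℕ := orderOf (r : ZMod m)

/-- The center of `ZM(m,n,r)` is `⟨b^d⟩` with `d = ord_m(r)`, of order `n/d`. -/
theorem stmt_6 {G : Type*} [Group G] [Finite G]
    (m n r : ℕ) (hm : 0 < m) (hn : 0 < n)
    (hgcd1 : Nat.gcd m n = 1) (hgcd2 : Nat.gcd m (r - 1) = 1)
    (hrn : r ^ n % m = 1 % m)
    (a b : G) (ha : orderOf a = m) (hb : orderOf b = n)
    (hrel : b⁻¹ * a * b = a ^ r)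
    (hgen : Subgroup.closure {a, b} = ⊤)
    (hcard : Nat.card G = m * n) :
    Subgroup.center G = Subgroup.zpowers (b ^ ordMod m r) ∧
    Nat.card (Subgroup.center G) = n / ordMod m r := by
  have : NeZero m := ⟨hm.ne'⟩
  have : NeZero n := ⟨hn.ne'⟩
  set d : ℕ := ordMod m r with hd
  -- basic facts about d
  have hrZ : ((r : ZMod m)) ^ n = 1 := by
    have : ((r ^ n : ℕ) : ZMod m) = ((1 : ℕ) : ZMod m) :=
      (ZMod.natCast_eq_natCast_iff _ _ _).mpr hrn
    simpa using this
  have hdn : d ∣ n := orderOf_dvd_of_pow_eq_one hrZ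
  have hdpos : 0 < d :=
    Nat.pos_of_ne_zero fun h0 => hn.ne' (Nat.eq_zero_of_zero_dvd (h0 ▸ hdn))
  have ham : a ^ m = 1 := by rw [← ha]; exact pow_orderOf_eq_one a
  have hbn : b ^ n = 1 := by rw [← hb]; exact pow_orderOf_eq_one b
  -- commutation rule: a^s * b = b * a^(r*s)
  have hcomm1 : ∀ s : ℕ, a ^ s * b = b * a ^ (r * s) := by
    intro s
    have h1 : a ^ s * b = b * (b⁻¹ * a * b) ^ s := by
      rw [show b⁻¹ * a * b = b⁻¹ * a * b⁻¹⁻¹ by group, conj_pow]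
      group
    rw [h1, hrel, ← pow_mul]
  -- general commutation: a^s * b^k = b^k * a^(s * r^k)
  have hcomm : ∀ k s : ℕ, a ^ s * b ^ k = b ^ k * a ^ (s * r ^ k) := by
    intro k
    induction k with
    | zero => intro s; simp
    | succ k ih =>
      intro s
      calc a ^ s * b ^ (k + 1) = (a ^ s * b ^ k) * b := by rw [pow_succ]; group
        _ = b ^ k * (a ^ (s * r ^ k) * b) := by rw [ih]; group
        _ = b ^ k * (b * a ^ (r * (s * r ^ k))) := by rw [hcomm1]
        _ = b ^ (k + 1) * a ^ (s * r ^ (k + 1)) := by rw [pow_succ, pow_succ]; ring_nf; group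
  -- a^i = a^j iff i ≡ j in ZMod m
  have haeq : ∀ i j : ℕ, a ^ i = a ^ j ↔ ((i : ZMod m) = (j : ZMod m)) := by
    intro i j
    rw [pow_eq_pow_iff_modEq, ha, ZMod.natCast_eq_natCast_iff]
  have hbeq : ∀ i j : ℕ, b ^ i = b ^ j ↔ ((i : ZMod n) = (j : ZMod n)) := by
    intro i j
    rw [pow_eq_pow_iff_modEq, hb, ZMod.natCast_eq_natCast_iff]
  -- decomposition: every g is a^i * b^j
  have hdecomp : ∀ g : G, ∃ i j : ℕ, g = a ^ i * b ^ j := by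
    have hinj : Function.Injective (fun p : ZMod m × ZMod n =>
        a ^ p.1.val * b ^ p.2.val) := by
      rintro ⟨i1, j1⟩ ⟨i2, j2⟩ h
      simp only at h
      -- the element x = (a^i2)⁻¹ * a^i1 = b^j2 * (b^j1)⁻¹
      set x : G := (a ^ i2.val)⁻¹ * a ^ i1.val with hx
      have hx2 : x = b ^ j2.val * (b ^ j1.val)⁻¹ := by
        rw [hx, inv_mul_eq_iff_eq_mul, ← mul_assoc, ← h]
        group
      have hxa : x = a ^ ((i1.val : ℤ) - (i2.val : ℤ)) := by
        rw [hx, zpow_sub, zpow_natCast, zpow_natCast]; group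
      have hxb : x = b ^ ((j2.val : ℤ) - (j1.val : ℤ)) := by
        rw [hx2, zpow_sub, zpow_natCast, zpow_natCast]
      have hxm : x ^ m = 1 := by
        rw [hxa, ← zpow_natCast, ← zpow_mul, mul_comm, zpow_mul, zpow_natCast, ham, one_zpow]
      have hxn : x ^ n = 1 := by
        rw [hxb, ← zpow_natCast, ← zpow_mul, mul_comm, zpow_mul, zpow_natCast, hbn, one_zpow]
      have hx1 : x = 1 := by
        have h1 : orderOf x ∣ Nat.gcd m n :=
          Nat.dvd_gcd (orderOf_dvd_of_pow_eq_one hxm) (orderOf_dvd_of_pow_eq_one hxn)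
        rw [hgcd1, Nat.dvd_one] at h1
        exact orderOf_eq_one_iff.mp h1
      have hi : i1 = i2 := by
        have : a ^ i1.val = a ^ i2.val := by
          rw [hx, inv_mul_eq_iff_eq_mul] at hx1; simpa using hx1
        have := (haeq _ _).mp this
        rwa [ZMod.natCast_val, ZMod.natCast_val, ZMod.cast_id, ZMod.cast_id] at this
      have hj : j1 = j2 := by
        have : b ^ j2.val = b ^ j1.val := by
          rw [hx2] at hx1
          rw [mul_inv_eq_iff_eq_mul] at hx1; simpa using hx1
        have := (hbeq _ _).mp this
        rw [ZMod.natCast_val, ZMod.natCast_val, ZMod.cast_id, ZMod.cast_id] at this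
        exact this.symm
      rw [hi, hj]
    have hsurj : Function.Surjective (fun p : ZMod m × ZMod n =>
        a ^ p.1.val * b ^ p.2.val) := by
      have := (Nat.bijective_iff_injective_and_card _).mpr
        ⟨hinj, by simp [Nat.card_prod, hcard]⟩
      exact this.2
    intro g
    obtain ⟨⟨i, j⟩, hij⟩ := hsurj g
    exact ⟨i.val, j.val, hij.symm⟩
  -- r^d ≡ 1 mod m
  have hrd : ((r : ZMod m)) ^ d = 1 := pow_orderOf_eq_one _
  -- b^d commutes with a
  have hbd_a : a * b ^ d = b ^ d * a := by
    have h0 := hcomm d 1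
    simp only [pow_one] at h0
    have h1 : a ^ (1 * r ^ d) = a ^ 1 := (haeq _ _).mpr (by push_cast; rw [hrd]; ring)
    rw [h0, h1, pow_one]
  -- center = zpowers (b^d)
  have hcenter : Subgroup.center G = Subgroup.zpowers (b ^ d) := by
    apply le_antisymm
    · intro g hg
      rw [Subgroup.mem_center_iff] at hg
      obtain ⟨i, j, rfl⟩ := hdecomp g
      -- commuting with b forces a^i = 1
      have h1 : b * a ^ i = a ^ i * b := by
        have := hg b
        rw [show a ^ i * b ^ j * b = a ^ i * b * b ^ j by group, ← mul_assoc] at this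
        exact mul_right_cancel this
      have h2 : a ^ i * b = b * a ^ (r * i) := by
        have := hcomm 1 i
        simp only [pow_one] at this
        rwa [mul_comm i] at this
      have h3 : (i : ZMod m) = 0 := by
        have h4 : a ^ (r * i) = a ^ i := by
          have : b * a ^ (r * i) = b * a ^ i := by rw [← h2, h1]
          exact mul_left_cancel this
        have h5 := (haeq _ _).mp h4
        push_cast at h5
        -- (r - 1) * i = 0 in ZMod m, and r - 1 is a unit
        have hunit : IsUnit ((r : ZMod m) - 1) := by
          rcases Nat.eq_zero_or_pos r with hr0 | hr1
          · subst hr0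
            simp only [Nat.zero_sub, Nat.gcd_zero_right] at hgcd2
            subst hgcd2
            exact isUnit_of_subsingleton _
          · have : ((r - 1 : ℕ) : ZMod m) = (r : ZMod m) - 1 := by
              push_cast [hr1]; ring
            rw [← this, ZMod.isUnit_iff_coprime]
            exact Nat.coprime_comm.mp hgcd2
        have : ((r : ZMod m) - 1) * (i : ZMod m) = 0 := by ring_nf; rw [mul_comm] at h5 ⊢; rw [h5]; ring
        exact (hunit.mul_right_eq_zero).mp this
      have hai : a ^ i = 1 := by
        have := (haeq i 0).mpr (by simpa using h3)
        simpa using this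
      rw [hai, one_mul]
      -- commuting with a forces d ∣ j
      have h6 : a * b ^ j = b ^ j * a := by
        have := hg a
        rw [hai, one_mul] at this
        exact this
      have h7 : a * b ^ j = b ^ j * a ^ (r ^ j) := by
        have := hcomm j 1
        rwa [pow_one, one_mul] at this
      have h8 : a ^ (r ^ j) = a := by
        have : b ^ j * a ^ (r ^ j) = b ^ j * a := by rw [← h7, h6]
        exact mul_left_cancel this
      have h9 : ((r : ZMod m)) ^ j = 1 := by
        have := (haeq (r ^ j) 1).mp (by rw [pow_one]; exact h8)
        push_cast at this
        simpa using this
      have hdj : d ∣ j := orderOf_dvd_of_pow_eq_one h9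
      obtain ⟨k, rfl⟩ := hdj
      exact ⟨(k : ℤ), by show (b ^ d) ^ (k : ℤ) = b ^ (d * k); rw [zpow_natCast, ← pow_mul]⟩
    · rw [Subgroup.zpowers_le]
      rw [Subgroup.mem_center_iff]
      intro g
      obtain ⟨i, j, rfl⟩ := hdecomp g
      have hcomm_ai : a ^ i * b ^ d = b ^ d * a ^ i := by
        induction i with
        | zero => simp
        | succ i ih =>
          rw [pow_succ]
          calc a ^ i * a * b ^ d = a ^ i * (b ^ d * a) := by rw [mul_assoc, hbd_a]
            _ = (a ^ i * b ^ d) * a := by group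
            _ = b ^ d * (a ^ i * a) := by rw [ih]; group
      calc a ^ i * b ^ j * b ^ d = a ^ i * b ^ d * b ^ j := by
            rw [mul_assoc, mul_assoc, ← pow_add, ← pow_add, Nat.add_comm]
        _ = b ^ d * (a ^ i * b ^ j) := by rw [hcomm_ai]; group
  refine ⟨hcenter, ?_⟩
  rw [hcenter, Nat.card_zpowers, orderOf_pow, hb, Nat.gcd_eq_right hdn]
end

section
/- In ZM(m,n,r), the centralizer of the subgroup H = ⟨a^{m₁}, b^{n₁}⟩ (where m₁ | m, n₁ | n) equals ⟨a^{m₁'}, b^{n₁'}⟩ with m₁' = m/gcd(m, r^{n₁}−1) and n₁' = ord_{m/m₁}(r). -/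
private lemma aux_dvd_mul_iff (m t i : ℕ) (hm : 0 < m) :
    m ∣ i * t ↔ m / Nat.gcd m t ∣ i := by
  set d := Nat.gcd m t with hd
  have hd0 : 0 < d := Nat.gcd_pos_of_pos_left _ hm
  have hdm : d ∣ m := Nat.gcd_dvd_left m t
  have hdt : d ∣ t := Nat.gcd_dvd_right m t
  constructor
  · intro h
    have hcop : Nat.Coprime (m / d) (t / d) := Nat.coprime_div_gcd_div_gcd hd0
    have h1 : d * (m / d) ∣ i * (d * (t / d)) := by
      rwa [Nat.mul_div_cancel' hdm, Nat.mul_div_cancel' hdt]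
    have h2 : d * (m / d) ∣ d * (i * (t / d)) := by
      rw [show d * (i * (t / d)) = i * (d * (t / d)) by ring]; exact h1
    have h3 : m / d ∣ i * (t / d) := (Nat.mul_dvd_mul_iff_left hd0).1 h2
    exact hcop.dvd_of_dvd_mul_right h3
  · rintro ⟨i', rfl⟩
    refine ⟨t / d * i', ?_⟩
    calc m / d * i' * t = m / d * t * i' := by ring
      _ = m / d * (d * (t / d)) * i' := by rw [Nat.mul_div_cancel' hdt]
      _ = m / d * d * (t / d) * i' := by ring
      _ = m * (t / d * i') := by rw [Nat.div_mul_cancel hdm]; ring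

private lemma aux_conj {G : Type*} [Group G] {a b : G} {r : ℕ}
    (hrel : b⁻¹ * a * b = a ^ r) : ∀ j i : ℕ, (b ^ j)⁻¹ * a ^ i * b ^ j = a ^ (i * r ^ j) := by
  have hone : ∀ k : ℕ, b⁻¹ * a ^ k * b = a ^ (k * r) := by
    intro k
    have : (b⁻¹ * a * b) ^ k = b⁻¹ * a ^ k * b := by
      have := conj_pow (i := k) (a := b⁻¹) (b := a); simpa using this
    rw [← this, hrel, ← pow_mul, mul_comm r k]
  intro j
  induction j with
  | zero => intro i; simp
  | succ j ih =>
    intro i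
    have : (b ^ (j + 1))⁻¹ * a ^ i * b ^ (j + 1)
        = b⁻¹ * ((b ^ j)⁻¹ * a ^ i * b ^ j) * b := by
      rw [pow_succ]; group
    rw [this, ih, hone, pow_succ]; ring_nf

private lemma aux_mem_centralizer_pair {G : Type*} [Group G] {x u v : G}
    (hu : u * x = x * u) (hv : v * x = x * v) :
    x ∈ Subgroup.centralizer ((Subgroup.closure {u, v} : Subgroup G) : Set G) := by
  rw [Subgroup.mem_centralizer_iff]
  intro h hh
  have hle : Subgroup.closure {u, v} ≤ Subgroup.centralizer {x} := by
    rw [Subgroup.closure_le]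
    intro y hy
    simp only [Set.mem_insert_iff, Set.mem_singleton_iff] at hy
    rcases hy with rfl | rfl
    · exact Subgroup.mem_centralizer_iff.2 (by rintro z rfl; exact hu.symm)
    · exact Subgroup.mem_centralizer_iff.2 (by rintro z rfl; exact hv.symm)
  exact (Subgroup.mem_centralizer_iff.1 (hle hh) x rfl).symm

/-- The centralizer of `⟨a^{m₁}, b^{n₁}⟩` in `ZM(m,n,r)` is `⟨a^{m₁'}, b^{n₁'}⟩`
with `m₁' = m / gcd(m, r^{n₁}-1)` and `n₁' = ord_{m/m₁}(r)`. -/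
theorem stmt_7 {G : Type*} [Group G] [Finite G]
    (m n r : ℕ) (hm : 0 < m) (hn : 0 < n)
    (hgcd1 : Nat.gcd m n = 1) (hgcd2 : Nat.gcd m (r - 1) = 1)
    (hrn : r ^ n % m = 1 % m)
    (a b : G) (ha : orderOf a = m) (hb : orderOf b = n)
    (hrel : b⁻¹ * a * b = a ^ r)
    (hgen : Subgroup.closure {a, b} = ⊤)
    (hcard : Nat.card G = m * n)
    (m₁ n₁ : ℕ) (hm₁ : m₁ ∣ m) (hn₁ : n₁ ∣ n) :
    Subgroup.centralizer ((Subgroup.closure {a ^ m₁, b ^ n₁} : Subgroup G) : Set G) =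
      Subgroup.closure {a ^ (m / Nat.gcd m (r ^ n₁ - 1)), b ^ ordMod (m / m₁) r} := by
  classical
  rcases Nat.eq_zero_or_pos r with hr | hr
  · -- degenerate case r = 0, which forces m = 1 and a = 1
    subst hr
    have hm1 : m = 1 := by simpa using hgcd2
    have ha1 : a = 1 := orderOf_eq_one_iff.mp (ha.trans hm1)
    subst ha1
    have hm₁1 : m₁ = 1 := Nat.dvd_one.mp (hm1 ▸ hm₁)
    have hzb : ∀ g : G, g ∈ Subgroup.zpowers b := by
      intro g
      have hle : Subgroup.closure ({1, b} : Set G) ≤ Subgroup.zpowers b := by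
        rw [Subgroup.closure_le]
        intro y hy
        simp only [Set.mem_insert_iff, Set.mem_singleton_iff] at hy
        rcases hy with rfl | rfl
        · exact Subgroup.one_mem _
        · exact Subgroup.mem_zpowers _
      exact hle (hgen ▸ Subgroup.mem_top g)
    have hcomm : ∀ x y : G, x * y = y * x := by
      intro x y
      obtain ⟨s, hs⟩ := hzb x
      obtain ⟨t, ht⟩ := hzb y
      rw [← hs, ← ht]
      exact ((Commute.refl b).zpow_zpow s t)
    have hcen : Subgroup.centralizer
        ((Subgroup.closure {(1:G) ^ m₁, b ^ n₁} : Subgroup G) : Set G) = ⊤ := by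
      rw [eq_top_iff]
      intro g _
      exact Subgroup.mem_centralizer_iff.2 fun h _ => hcomm h g
    have hord : ordMod (m / m₁) 0 = 1 := by
      have h11 : m / m₁ = 1 := by rw [hm1, hm₁1]
      rw [h11]
      exact orderOf_eq_one_iff.mpr (Subsingleton.elim _ _)
    rw [hcen, hord, eq_comm, eq_top_iff, ← hgen]
    rw [Subgroup.closure_le]
    intro y hy
    simp only [Set.mem_insert_iff, Set.mem_singleton_iff] at hy
    rcases hy with rfl | rfl
    · simpa using Subgroup.one_mem _
    · exact Subgroup.subset_closure (by simp)
  · -- main case: r ≥ 1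
    have hm₁0 : 0 < m₁ := Nat.pos_of_dvd_of_pos hm₁ hm
    set d := Nat.gcd m (r ^ n₁ - 1) with hd
    set m₁' := m / d with hm₁'
    set n₁' := ordMod (m / m₁) r with hn₁'
    have hconj := aux_conj hrel
    have hrpow : ∀ t : ℕ, 1 ≤ r ^ t := fun t => Nat.one_le_pow _ _ hr
    -- key equivalence for the `a`-exponent condition
    have key1 : ∀ i : ℕ, a ^ (i * r ^ n₁) = a ^ i ↔ m₁' ∣ i := by
      intro i
      rw [pow_eq_pow_iff_modEq, ha, Nat.ModEq.comm,
        Nat.modEq_iff_dvd' (Nat.le_mul_of_pos_right i (hrpow n₁)),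
        show i * r ^ n₁ - i = i * (r ^ n₁ - 1) by rw [Nat.mul_sub, mul_one],
        aux_dvd_mul_iff m _ i hm]
    -- key equivalence for the `b`-exponent condition
    have key2 : ∀ j : ℕ, a ^ (m₁ * r ^ j) = a ^ m₁ ↔ n₁' ∣ j := by
      intro j
      rw [pow_eq_pow_iff_modEq, ha, Nat.ModEq.comm,
        Nat.modEq_iff_dvd' (Nat.le_mul_of_pos_right m₁ (hrpow j)),
        show m₁ * r ^ j - m₁ = m₁ * (r ^ j - 1) by rw [Nat.mul_sub, mul_one]]
      have hmm : m = m₁ * (m / m₁) := (Nat.mul_div_cancel' hm₁).symm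
      rw [show (m ∣ m₁ * (r ^ j - 1)) ↔ (m₁ * (m / m₁) ∣ m₁ * (r ^ j - 1)) by rw [← hmm],
        Nat.mul_dvd_mul_iff_left hm₁0,
        ← Nat.modEq_iff_dvd' (hrpow j), ← ZMod.natCast_eq_natCast_iff]
      push_cast
      rw [hn₁', ordMod, eq_comm, ← orderOf_dvd_iff_pow_eq_one]
    -- normality of ⟨a⟩
    have hAnormal : (Subgroup.zpowers a).Normal := by
      rw [← Subgroup.normalizer_eq_top_iff, eq_top_iff, ← hgen, Subgroup.closure_le]
      intro y hy
      have hbin : ∀ k : ℤ, b⁻¹ * a ^ k * b ∈ Subgroup.zpowers a := by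
        intro k
        have : (b⁻¹ * a * b) ^ k = b⁻¹ * a ^ k * b := by
          have := conj_zpow (i := k) (a := b⁻¹) (b := a); simpa using this
        rw [← this, hrel, ← zpow_natCast, ← zpow_mul]
        exact Subgroup.zpow_mem _ (Subgroup.mem_zpowers a) _
      simp only [Set.mem_insert_iff, Set.mem_singleton_iff] at hy
      rcases hy with rfl | rfl
      · exact Subgroup.le_normalizer (Subgroup.mem_zpowers _)
      · -- b normalizes ⟨a⟩
        have hmap : ∀ x ∈ Subgroup.zpowers a, y⁻¹ * x * y ∈ Subgroup.zpowers a := by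
          rintro x ⟨k, rfl⟩
          exact hbin k
        -- the conjugation map is injective on the finite subgroup, hence surjective
        have hfin : Finite (Subgroup.zpowers a) := inferInstance
        let f : Subgroup.zpowers a → Subgroup.zpowers a :=
          fun x => ⟨y⁻¹ * (x : G) * y, hmap x x.2⟩
        have hinj : Function.Injective f := by
          intro x₁ x₂ hx
          have : y⁻¹ * (x₁ : G) * y = y⁻¹ * (x₂ : G) * y := congrArg Subtype.val hx
          ext
          exact mul_left_cancel (mul_right_cancel this)
        have hsurj : Function.Surjective f := Finite.surjective_of_injective hinj
        rw [SetLike.mem_coe, Subgroup.mem_normalizer_iff]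
        intro h
        constructor
        · rintro ⟨k, rfl⟩
          obtain ⟨⟨x, hx⟩, hfx⟩ := hsurj ⟨a, Subgroup.mem_zpowers a⟩
          have hfx' : y⁻¹ * x * y = a := congrArg Subtype.val hfx
          have hyx : y * a * y⁻¹ = x := by rw [← hfx']; group
          have : y * a ^ k * y⁻¹ = x ^ k := by
            rw [← hyx]
            have := conj_zpow (i := k) (a := y) (b := a); simpa using this.symm
          rw [this]
          exact Subgroup.zpow_mem _ hx _
        · intro hmem
          have : y⁻¹ * (y * h * y⁻¹) * y ∈ Subgroup.zpowers a := hmap _ hmem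
          simpa [mul_assoc] using this
    haveI := hAnormal
    -- every element has the form a^i * b^j
    have htop : Subgroup.zpowers a ⊔ Subgroup.zpowers b = ⊤ := by
      rw [eq_top_iff, ← hgen, Subgroup.closure_le]
      intro y hy
      simp only [Set.mem_insert_iff, Set.mem_singleton_iff] at hy
      rcases hy with rfl | rfl
      · exact SetLike.le_def.1 le_sup_left (Subgroup.mem_zpowers y)
      · exact SetLike.le_def.1 le_sup_right (Subgroup.mem_zpowers y)
    have hform : ∀ g : G, ∃ i j : ℕ, g = a ^ i * b ^ j := by
      intro g
      have hg : g ∈ ((Subgroup.zpowers a ⊔ Subgroup.zpowers b : Subgroup G) : Set G) := by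
        rw [htop]; trivial
      rw [Subgroup.normal_mul] at hg
      obtain ⟨x, hx, y, hy, hxy⟩ := hg
      obtain ⟨i, hi⟩ := ((isOfFinOrder_of_finite a).mem_powers_iff_mem_zpowers).2 hx
      obtain ⟨j, hj⟩ := ((isOfFinOrder_of_finite b).mem_powers_iff_mem_zpowers).2 hy
      exact ⟨i, j, by rw [← hxy, ← hi, ← hj]⟩
    apply le_antisymm
    · -- centralizer ≤ closure
      intro g hg
      obtain ⟨i, j, rfl⟩ := hform g
      have hc1 : a ^ m₁ * (a ^ i * b ^ j) = a ^ i * b ^ j * a ^ m₁ :=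
        Subgroup.mem_centralizer_iff.1 hg _ (Subgroup.subset_closure (by simp))
      have hc2 : b ^ n₁ * (a ^ i * b ^ j) = a ^ i * b ^ j * b ^ n₁ :=
        Subgroup.mem_centralizer_iff.1 hg _ (Subgroup.subset_closure (by simp))
      -- from hc1: a^m₁ commutes with b^j
      have h1 : a ^ m₁ * b ^ j = b ^ j * a ^ m₁ := by
        have hl : a ^ m₁ * (a ^ i * b ^ j) = a ^ i * (a ^ m₁ * b ^ j) := by
          rw [← mul_assoc, ((Commute.refl a).pow_pow m₁ i).eq, mul_assoc]
        rw [hl, mul_assoc] at hc1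
        exact mul_left_cancel hc1
      have heq1 : a ^ (m₁ * r ^ j) = a ^ m₁ := by
        rw [← hconj j m₁, mul_assoc, h1]
        group
      -- from hc2: a^i commutes with b^n₁
      have h2 : b ^ n₁ * a ^ i = a ^ i * b ^ n₁ := by
        have hrr : a ^ i * b ^ j * b ^ n₁ = a ^ i * b ^ n₁ * b ^ j := by
          rw [mul_assoc, ((Commute.refl b).pow_pow j n₁).eq, ← mul_assoc]
        rw [hrr, ← mul_assoc] at hc2
        exact mul_right_cancel hc2
      have heq2 : a ^ (i * r ^ n₁) = a ^ i := by
        rw [← hconj n₁ i, mul_assoc, ← h2]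
        group
      obtain ⟨i', rfl⟩ := (key1 i).1 heq2
      obtain ⟨j', rfl⟩ := (key2 j).1 heq1
      rw [pow_mul, pow_mul]
      exact Subgroup.mul_mem _
        (Subgroup.pow_mem _ (Subgroup.subset_closure (by simp)) i')
        (Subgroup.pow_mem _ (Subgroup.subset_closure (by simp)) j')
    · -- closure ≤ centralizer
      rw [Subgroup.closure_le]
      intro y hy
      simp only [Set.mem_insert_iff, Set.mem_singleton_iff] at hy
      rcases hy with rfl | rfl
      · -- a^{m₁'} centralizes
        have hca : a ^ m₁ * a ^ m₁' = a ^ m₁' * a ^ m₁ := ((Commute.refl a).pow_pow m₁ m₁').eq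
        have heq : a ^ (m₁' * r ^ n₁) = a ^ m₁' := (key1 m₁').2 dvd_rfl
        have hcb : b ^ n₁ * a ^ m₁' = a ^ m₁' * b ^ n₁ := by
          have hth := hconj n₁ m₁'
          rw [heq] at hth
          conv_lhs => rw [← hth]
          group
        exact aux_mem_centralizer_pair hca hcb
      · -- b^{n₁'} centralizes
        have heq : a ^ (m₁ * r ^ n₁') = a ^ m₁ := (key2 n₁').2 dvd_rfl
        have hca : a ^ m₁ * b ^ n₁' = b ^ n₁' * a ^ m₁ := by
          have hth := hconj n₁' m₁
          rw [heq] at hth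
          conv_rhs => rw [← hth]
          group
        have hcb : b ^ n₁ * b ^ n₁' = b ^ n₁' * b ^ n₁ := ((Commute.refl b).pow_pow n₁ n₁').eq
        exact aux_mem_centralizer_pair hca hcb
end

section
/- In ZM(m,n,r), for divisors m₁ | m, n₁ | n, the Chermak-Delgado measure of H = ⟨a^{m₁}, b^{n₁}⟩ equals m·n²·gcd(m, r^{n₁}−1) / (m₁·n₁·ord_{m/m₁}(r)). -/
theorem Nat.dvd_mul_iff_div_gcd_dvd {m c i : ℕ} (hm : 0 < m) :
    m ∣ i * c ↔ m / m.gcd c ∣ i := by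
  rw [← dvd_mul_gcd_iff_dvd_mul, Nat.div_dvd_iff_dvd_mul (Nat.gcd_dvd_left m c)
    (Nat.gcd_pos_of_pos_left c hm), mul_comm]

theorem Nat.mul_modEq_self_iff_div_gcd_dvd {m k i : ℕ} (hm : 0 < m) (hk : k.Coprime m) :
    i * k ≡ i [MOD m] ↔ m / m.gcd (k - 1) ∣ i := by
  rcases Nat.eq_zero_or_pos k with rfl | hk0
  · obtain rfl : m = 1 := Nat.coprime_zero_left m |>.mp hk
    simp [Nat.modEq_one]
  rw [Nat.ModEq.comm, Nat.modEq_iff_dvd' (Nat.le_mul_of_pos_right i hk0), ← Nat.mul_sub_one,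
    Nat.dvd_mul_iff_div_gcd_dvd hm]

theorem ordMod_dvd_iff {k r j : ℕ} : ordMod k r ∣ j ↔ r ^ j ≡ 1 [MOD k] := by
  rw [ordMod, orderOf_dvd_iff_pow_eq_one, ← Nat.cast_pow, ← Nat.cast_one,
    ZMod.natCast_eq_natCast_iff]

theorem mul_pow_modEq_self_iff_ordMod_dvd {m m₁ r j : ℕ} (hm₁ : m₁ ∣ m) (hm₁0 : m₁ ≠ 0) :
    m₁ * r ^ j ≡ m₁ [MOD m] ↔ ordMod (m / m₁) r ∣ j := by
  have h := Nat.ModEq.mul_left_cancel_iff' (a := r ^ j) (b := 1) (m := m / m₁) hm₁0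
  rwa [Nat.mul_div_cancel' hm₁, mul_one, ← ordMod_dvd_iff] at h

section Group

variable {G : Type*} [Group G]

namespace Subgroup

theorem card_sup_of_normal_of_disjoint {N K : Subgroup G} [N.Normal] (h : Disjoint N K) :
    Nat.card ↥(N ⊔ K) = Nat.card N * Nat.card K := by
  have hrel : N.relIndex (N ⊔ K) = Nat.card K := by
    rw [sup_comm, relIndex_sup_right, ← inf_relIndex_right, h.eq_bot, relIndex_bot_left]
  rw [← hrel, ← relIndex_bot_left, ← relIndex_bot_left]
  exact (relIndex_mul_relIndex _ _ _ bot_le le_sup_left).symm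

theorem mem_normalizer_zpowers_of_conj {g x : G}
    (h₁ : g * x * g⁻¹ ∈ zpowers x) (h₂ : g⁻¹ * x * g ∈ zpowers x) :
    g ∈ normalizer (zpowers x : Set G) := by
  have hconj : ∀ k : G, k * x * k⁻¹ ∈ zpowers x → ∀ y ∈ zpowers x, k * y * k⁻¹ ∈ zpowers x :=
    fun k hk y hy => (zpowers_le (H := (zpowers x).comap (MulAut.conj k).toMonoidHom)).2 hk hy
  refine mem_normalizer_iff.2 fun y => ⟨hconj g h₁ y, fun hy => ?_⟩
  simpa [mul_assoc] using hconj g⁻¹ (by simpa using h₂) _ hy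

theorem closure_pair_eq_zpowers_sup (x y : G) : closure {x, y} = zpowers x ⊔ zpowers y := by
  rw [zpowers_eq_closure, zpowers_eq_closure, ← closure_union, Set.singleton_union]

theorem card_closure_pair_of_coprime {x y : G} [(zpowers x).Normal]
    (h : (orderOf x).Coprime (orderOf y)) :
    Nat.card (closure {x, y}) = orderOf x * orderOf y := by
  rw [← Nat.card_zpowers, ← Nat.card_zpowers] at h ⊢
  rw [closure_pair_eq_zpowers_sup, card_sup_of_normal_of_disjoint (disjoint_of_coprime_natCard h)]

end Subgroup

theorem commute_mul_right_iff_of_commute_left {a b c : G} (h : Commute a b) :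
    Commute a (b * c) ↔ Commute a c :=
  ⟨fun hbc => by simpa using h.inv_right.mul_right hbc, h.mul_right⟩

theorem commute_mul_right_iff_of_commute_right {a b c : G} (h : Commute a c) :
    Commute a (b * c) ↔ Commute a b :=
  ⟨fun hbc => by simpa using hbc.mul_right h.inv_right, (·.mul_right h)⟩

open Subgroup

theorem exists_pow_mul_pow_eq {a b : G} [(zpowers a).Normal] (ha : IsOfFinOrder a)
    (hb : IsOfFinOrder b) (hgen : closure {a, b} = ⊤) (x : G) :
    ∃ i j : ℕ, a ^ i * b ^ j = x := by
  have hx : x ∈ zpowers a ⊔ zpowers b := by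
    rw [← closure_pair_eq_zpowers_sup, hgen]
    exact mem_top x
  obtain ⟨y, hy, z, hz, rfl⟩ := mem_sup_of_normal_left.1 hx
  obtain ⟨i, rfl⟩ := ha.mem_powers_iff_mem_zpowers.2 hy
  obtain ⟨j, rfl⟩ := hb.mem_powers_iff_mem_zpowers.2 hz
  exact ⟨i, j, rfl⟩

variable {a b : G} {r : ℕ}

theorem inv_pow_mul_pow_mul_pow_of_conj (hrel : b⁻¹ * a * b = a ^ r) (k j : ℕ) :
    (b ^ j)⁻¹ * a ^ k * b ^ j = a ^ (k * r ^ j) := by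
  induction j with
  | zero => simp
  | succ j ih =>
    calc (b ^ (j + 1))⁻¹ * a ^ k * b ^ (j + 1) = b⁻¹ * ((b ^ j)⁻¹ * a ^ k * b ^ j) * b := by
          group
      _ = (b⁻¹ * a * b) ^ (k * r ^ j) := by simpa [ih] using (conj_pow (a := b⁻¹)).symm
      _ = a ^ (k * r ^ (j + 1)) := by rw [hrel, ← pow_mul]; ring_nf

theorem commute_pow_pow_iff (hrel : b⁻¹ * a * b = a ^ r) {k j : ℕ} :
    Commute (a ^ k) (b ^ j) ↔ k * r ^ j ≡ k [MOD orderOf a] := by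
  rw [← pow_eq_pow_iff_modEq, ← inv_pow_mul_pow_mul_pow_of_conj hrel, mul_assoc,
    inv_mul_eq_iff_eq_mul]
  rfl

theorem zpowers_pow_normal (hrel : b⁻¹ * a * b = a ^ r) (hb : IsOfFinOrder b)
    (hgen : closure {a, b} = ⊤) (s : ℕ) : (zpowers (a ^ s)).Normal := by
  have hconj : ∀ j, (b ^ j)⁻¹ * a ^ s * b ^ j ∈ zpowers (a ^ s) := fun j => by
    rw [inv_pow_mul_pow_mul_pow_of_conj hrel, pow_mul]
    exact pow_mem (mem_zpowers _) _
  obtain ⟨j, hj⟩ := hb.mem_powers_iff_mem_zpowers.2 (inv_mem (mem_zpowers b))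
  rw [← normalizer_eq_top_iff, eq_top_iff, ← hgen, closure_le, Set.insert_subset_iff,
    Set.singleton_subset_iff]
  refine ⟨mem_normalizer_zpowers_of_conj ?_ ?_, mem_normalizer_zpowers_of_conj ?_ ?_⟩
  · rw [(Commute.self_pow a s).eq, mul_inv_cancel_right]
    exact mem_zpowers _
  · rw [(Commute.self_pow a s).inv_left.eq, inv_mul_cancel_right]
    exact mem_zpowers _
  · convert hconj j using 2 <;> simp [hj]
  · simpa using hconj 1

theorem centralizer_closure_pow_pow {m m₁ n₁ : ℕ} (hm : 0 < m) (ha : orderOf a = m)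
    (hb : IsOfFinOrder b) (hrel : b⁻¹ * a * b = a ^ r) (hgen : closure {a, b} = ⊤)
    (hr : r.Coprime m) (hm₁ : m₁ ∣ m) :
    centralizer (closure {a ^ m₁, b ^ n₁} : Set G) =
      closure {a ^ (m / m.gcd (r ^ n₁ - 1)), b ^ ordMod (m / m₁) r} := by
  have hm₁0 : m₁ ≠ 0 := by rintro rfl; exact hm.ne' (zero_dvd_iff.1 hm₁)
  have hmem : ∀ i j : ℕ, a ^ i * b ^ j ∈ centralizer (closure {a ^ m₁, b ^ n₁} : Set G) ↔
      m / m.gcd (r ^ n₁ - 1) ∣ i ∧ ordMod (m / m₁) r ∣ j := by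
    intro i j
    simp only [centralizer_closure, mem_centralizer_iff, Set.forall_mem_insert,
      Set.mem_singleton_iff, forall_eq]
    change Commute _ _ ∧ Commute _ _ ↔ _
    rw [commute_mul_right_iff_of_commute_left ((Commute.refl a).pow_pow _ _),
      commute_mul_right_iff_of_commute_right ((Commute.refl b).pow_pow _ _),
      Commute.symm_iff (a := b ^ n₁), commute_pow_pow_iff hrel, commute_pow_pow_iff hrel, ha,
      mul_pow_modEq_self_iff_ordMod_dvd hm₁ hm₁0,
      Nat.mul_modEq_self_iff_div_gcd_dvd hm (hr.pow_left n₁), and_comm]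
  have : (zpowers a).Normal := by simpa using zpowers_pow_normal hrel hb hgen 1
  apply le_antisymm
  · intro x hx
    obtain ⟨i, j, rfl⟩ := exists_pow_mul_pow_eq (orderOf_pos_iff.1 (ha ▸ hm)) hb hgen x
    obtain ⟨⟨c, rfl⟩, ⟨d, rfl⟩⟩ := (hmem i j).1 hx
    rw [pow_mul, pow_mul]
    exact mul_mem (pow_mem (subset_closure (Set.mem_insert _ _)) _)
      (pow_mem (subset_closure (Set.mem_insert_of_mem _ (Set.mem_singleton _))) _)
  · rw [closure_le, Set.insert_subset_iff, Set.singleton_subset_iff]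
    constructor
    · simpa only [pow_zero, mul_one, SetLike.mem_coe] using
        (hmem (m / m.gcd (r ^ n₁ - 1)) 0).2 ⟨dvd_rfl, dvd_zero _⟩
    · simpa only [pow_zero, one_mul, SetLike.mem_coe] using
        (hmem 0 (ordMod (m / m₁) r)).2 ⟨dvd_zero _, dvd_rfl⟩

theorem card_closure_pow_pow {m n s u : ℕ} (hm : 0 < m) (hn : 0 < n) (ha : orderOf a = m)
    (hb : orderOf b = n) (hmn : m.Coprime n) (hrel : b⁻¹ * a * b = a ^ r)
    (hgen : closure {a, b} = ⊤) (hs : s ∣ m) (hu : u ∣ n) :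
    Nat.card (closure {a ^ s, b ^ u}) = m / s * (n / u) := by
  have := zpowers_pow_normal hrel (orderOf_pos_iff.1 (hb ▸ hn)) hgen s
  rw [← ha, ← hb] at hmn
  have hcop : (orderOf (a ^ s)).Coprime (orderOf (b ^ u)) :=
    (hmn.coprime_dvd_left (orderOf_pow_dvd s)).coprime_dvd_right (orderOf_pow_dvd u)
  rw [card_closure_pair_of_coprime hcop,
    orderOf_pow_of_dvd (Nat.pos_of_dvd_of_pos hs hm).ne' (ha ▸ hs),
    orderOf_pow_of_dvd (Nat.pos_of_dvd_of_pos hu hn).ne' (hb ▸ hu), ha, hb]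

end Group

theorem stmt_8_general {G : Type*} [Group G]
    (m n r : ℕ) (hm : 0 < m) (hn : 0 < n)
    (hgcd1 : Nat.gcd m n = 1)
    (hrn : r ^ n % m = 1 % m)
    (a b : G) (ha : orderOf a = m) (hb : orderOf b = n)
    (hrel : b⁻¹ * a * b = a ^ r)
    (hgen : Subgroup.closure {a, b} = ⊤)
    (m₁ n₁ : ℕ) (hm₁ : m₁ ∣ m) (hn₁ : n₁ ∣ n)
    (H : Subgroup G) (hH : H = Subgroup.closure {a ^ m₁, b ^ n₁}) :
    Nat.card H * Nat.card (Subgroup.centralizer (H : Set G)) *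
        (m₁ * n₁ * ordMod (m / m₁) r) =
      m * n ^ 2 * Nat.gcd m (r ^ n₁ - 1) := by
  subst hH
  set g := m.gcd (r ^ n₁ - 1)
  set t := ordMod (m / m₁) r
  have hr : r.Coprime m :=
    (Nat.coprime_pow_left_iff hn r m).1 ((Nat.ModEq.gcd_eq hrn).trans (Nat.gcd_one_left m))
  have ht : t ∣ n := ordMod_dvd_iff.2 (Nat.ModEq.of_dvd (Nat.div_dvd_of_dvd hm₁) hrn)
  have hg : g ∣ m := Nat.gcd_dvd_left _ _
  rw [centralizer_closure_pow_pow hm ha (orderOf_pos_iff.1 (hb ▸ hn)) hrel hgen hr hm₁,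
    card_closure_pow_pow hm hn ha hb hgcd1 hrel hgen hm₁ hn₁,
    card_closure_pow_pow hm hn ha hb hgcd1 hrel hgen (Nat.div_dvd_of_dvd hg) ht,
    Nat.div_div_self hg hm.ne']
  calc m / m₁ * (n / n₁) * (g * (n / t)) * (m₁ * n₁ * t)
      = (m / m₁ * m₁) * (n / n₁ * n₁) * (n / t * t) * g := by ring
    _ = m * n ^ 2 * g := by
      rw [Nat.div_mul_cancel hm₁, Nat.div_mul_cancel hn₁, Nat.div_mul_cancel ht]; ring

/-- The Chermak–Delgado measure of `⟨a^{m₁}, b^{n₁}⟩` in `ZM(m,n,r)` equals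
`m n² gcd(m, r^{n₁}-1) / (m₁ n₁ ord_{m/m₁}(r))` (stated multiplicatively). -/
theorem stmt_8 {G : Type*} [Group G] [Finite G]
    (m n r : ℕ) (hm : 0 < m) (hn : 0 < n)
    (hgcd1 : Nat.gcd m n = 1) (hgcd2 : Nat.gcd m (r - 1) = 1)
    (hrn : r ^ n % m = 1 % m)
    (a b : G) (ha : orderOf a = m) (hb : orderOf b = n)
    (hrel : b⁻¹ * a * b = a ^ r)
    (hgen : Subgroup.closure {a, b} = ⊤)
    (hcard : Nat.card G = m * n)
    (m₁ n₁ : ℕ) (hm₁ : m₁ ∣ m) (hn₁ : n₁ ∣ n)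
    (H : Subgroup G) (hH : H = Subgroup.closure {a ^ m₁, b ^ n₁}) :
    Nat.card H * Nat.card (Subgroup.centralizer (H : Set G)) *
        (m₁ * n₁ * ordMod (m / m₁) r) =
      m * n ^ 2 * Nat.gcd m (r ^ n₁ - 1) :=
  stmt_8_general m n r hm hn hgcd1 hrn a b ha hb hrel hgen m₁ n₁ hm₁ hn₁ H hH
end

section
/- The maximal Chermak-Delgado measure of ZM(m,n,r) is m²n²/d², where d = ord_m(r). -/
/-!
Write `A = ⟨a⟩`, a normal subgroup of order `m`, and `π : G → G ⧸ A`; the quotient is cyclic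
of order `n`, generated by `π b`. Since `b⁻ʲ z bʲ = z ^ rʲ` for `z ∈ A`, an element `bʲ y` (`y ∈ A`)
centralizing a subgroup `K ≤ A` of order `u` has `ord_u(r) ∣ j`. For a subgroup `H` with
centralizer `C` this gives `|π H| · ord_{|C ∩ A|}(r) ≤ n` and `|π C| · ord_{|H ∩ A|}(r) ≤ n`;
together with `|K| = |π K| · |K ∩ A|` and `d · u ≤ ord_u(r) · m` for `u ∣ m` (the kernel of
`(ℤ/m)ˣ → (ℤ/u)ˣ` has at most `m / u` elements) it yields `|H| · |C| · d² ≤ m² n²`.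
Equality holds for `C_G(A) = ⟨a, b^d⟩`: it is abelian, being cyclic modulo the central subgroup
`A`, hence self-centralizing, and has order `m n / d`.
-/

open Subgroup

theorem Subgroup.card_eq_card_map_mul_card_inf_ker {G G' : Type*} [Group G] [Group G']
    (f : G →* G') (K : Subgroup G) :
    Nat.card K = Nat.card (K.map f) * Nat.card (K ⊓ f.ker : Subgroup G) := by
  rw [← (f.domRestrict K).ker.card_mul_index, index_ker, MonoidHom.domRestrict_range,
    MonoidHom.ker_domRestrict, ← inf_subgroupOf_left,
    Nat.card_congr (subgroupOfEquivOfLe inf_le_left).toEquiv, mul_comm]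

theorem orderOf_le_orderOf_map_mul_card_ker {G G' : Type*} [Group G] [Group G'] [Finite G]
    (φ : G →* G') (x : G) : orderOf x ≤ orderOf (φ x) * Nat.card φ.ker := by
  set t := orderOf (φ x)
  have ht : 0 < t := (φ.isOfFinOrder (isOfFinOrder_of_finite x)).orderOf_pos
  have hker : x ^ t ∈ φ.ker := by rw [MonoidHom.mem_ker, map_pow, pow_orderOf_eq_one]
  calc orderOf x ≤ t * orderOf (x ^ t) :=
        Nat.le_of_dvd (Nat.mul_pos ht (orderOf_pos _)) <| orderOf_dvd_of_pow_eq_one <| by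
          rw [pow_mul, pow_orderOf_eq_one]
    _ ≤ t * Nat.card φ.ker := Nat.mul_le_mul_left t (φ.ker.orderOf_le_card (Set.toFinite _) hker)

namespace ZMod

theorem card_ker_unitsMap_mul_le {m u : ℕ} [NeZero m] (hu : u ∣ m) :
    Nat.card (unitsMap hu).ker * u ≤ m := by
  set f := (castHom hu (ZMod u)).toAddMonoidHom
  have hcard : Nat.card f.ker * u = m := by
    have h := f.ker.card_mul_index
    rwa [AddSubgroup.index_ker, AddMonoidHom.range_eq_top.mpr (castHom_surjective hu),
      AddSubgroup.card_top, Nat.card_zmod, Nat.card_zmod] at h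
  have hsub (x : (unitsMap hu).ker) : (x.1.1 - 1 : ZMod m) ∈ f.ker := by
    have : castHom hu (ZMod u) x.1.1 = 1 := congrArg Units.val x.2
    change castHom hu (ZMod u) (x.1.1 - 1) = 0
    rw [map_sub, this, map_one, sub_self]
  calc Nat.card (unitsMap hu).ker * u ≤ Nat.card f.ker * u :=
        Nat.mul_le_mul_right u <| Nat.card_le_card_of_injective (fun x => ⟨_, hsub x⟩)
          fun x y hxy => Subtype.ext (Units.ext (sub_left_inj.mp (congrArg Subtype.val hxy)))
    _ = m := hcard

end ZMod

theorem ordMod_mul_le_ordMod_mul {m u r : ℕ} [NeZero m] (hu : u ∣ m) (hr : IsUnit (r : ZMod m)) :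
    ordMod m r * u ≤ ordMod u r * m := by
  have hmap : ((ZMod.unitsMap hu hr.unit : (ZMod u)ˣ) : ZMod u) = r := by
    simp [ZMod.unitsMap]
  calc ordMod m r * u = orderOf hr.unit * u := by rw [ordMod, ← orderOf_units, hr.unit_spec]
    _ ≤ orderOf (ZMod.unitsMap hu hr.unit) * Nat.card (ZMod.unitsMap hu).ker * u :=
        Nat.mul_le_mul_right u (orderOf_le_orderOf_map_mul_card_ker _ _)
    _ ≤ ordMod u r * m := by
        rw [mul_assoc, ordMod, ← hmap, orderOf_units]
        exact Nat.mul_le_mul_left _ (ZMod.card_ker_unitsMap_mul_le hu)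

theorem ordMod_dvd_ordMod {u m : ℕ} (r : ℕ) (h : u ∣ m) : ordMod u r ∣ ordMod m r := by
  simpa [ordMod] using orderOf_map_dvd (ZMod.castHom h (ZMod u)).toMonoidHom (r : ZMod m)

theorem mem_normalizer_zpowers_of_inv_mul_mul_mem {G : Type*} [Group G] [Finite G] {g x : G}
    (h : g⁻¹ * x * g ∈ zpowers x) : g ∈ normalizer (zpowers x : Set G) := by
  have hconj : MulAut.conj g⁻¹ x = g⁻¹ * x * g := by simp
  have hmap : (zpowers x).map (MulAut.conj g⁻¹).toMonoidHom = zpowers x := by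
    rw [MonoidHom.map_zpowers, MulEquiv.coe_toMonoidHom, hconj]
    refine eq_of_le_of_card_ge (zpowers_le.mpr h) ?_
    rw [Nat.card_zpowers, Nat.card_zpowers, ← hconj, MulEquiv.orderOf_eq]
  simpa using inv_mem (mem_normalizer_iff_map_conj_eq.mpr hmap)

section Metacyclic

variable {G : Type*} [Group G] {a b : G} {r : ℕ}

theorem semiconjBy_pow_pow_pow (hrel : b⁻¹ * a * b = a ^ r) (j : ℕ) :
    SemiconjBy (b ^ j) (a ^ r ^ j) a := by
  have hb : SemiconjBy b (a ^ r) a := by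
    rw [SemiconjBy, ← hrel]; group
  induction j with
  | zero => simp
  | succ j ih =>
    rw [pow_succ, pow_succ', pow_mul]
    exact ih.mul_left (hb.pow_right (r ^ j))

theorem semiconjBy_pow_pow_of_mem_zpowers (hrel : b⁻¹ * a * b = a ^ r) (j : ℕ) {z : G}
    (hz : z ∈ zpowers a) : SemiconjBy (b ^ j) (z ^ r ^ j) z := by
  obtain ⟨k, rfl⟩ := mem_zpowers_iff.mp hz
  rw [show (a ^ k) ^ r ^ j = (a ^ r ^ j) ^ k by group]
  exact (semiconjBy_pow_pow_pow hrel j).zpow_right k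

theorem ordMod_orderOf_dvd_of_commute (hrel : b⁻¹ * a * b = a ^ r) {z : G}
    (hz : z ∈ zpowers a) {j : ℕ} (hc : Commute z (b ^ j)) : ordMod (orderOf z) r ∣ j := by
  have hfix : z ^ r ^ j = z ^ 1 := by
    rw [pow_one]
    exact mul_left_cancel ((semiconjBy_pow_pow_of_mem_zpowers hrel j hz).trans hc.symm.eq.symm)
  refine orderOf_dvd_of_pow_eq_one ?_
  exact_mod_cast (ZMod.natCast_eq_natCast_iff _ _ _).mpr (pow_eq_pow_iff_modEq.mp hfix)

theorem commute_pow_ordMod (hrel : b⁻¹ * a * b = a ^ r) :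
    Commute a (b ^ ordMod (orderOf a) r) := by
  have hr : r ^ ordMod (orderOf a) r ≡ 1 [MOD orderOf a] := by
    rw [← ZMod.natCast_eq_natCast_iff]
    exact_mod_cast pow_orderOf_eq_one (r : ZMod (orderOf a))
  have hsemi := semiconjBy_pow_pow_pow hrel (ordMod (orderOf a) r)
  have hfix : a ^ r ^ ordMod (orderOf a) r = a := (pow_eq_pow_iff_modEq.mpr hr).trans (pow_one a)
  rw [hfix] at hsemi
  exact hsemi.eq.symm

theorem zpowers_normal [Finite G] (hrel : b⁻¹ * a * b = a ^ r) (hgen : closure {a, b} = ⊤) :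
    (zpowers a).Normal := by
  have hb : b ∈ normalizer (zpowers a : Set G) :=
    mem_normalizer_zpowers_of_inv_mul_mul_mem (hrel ▸ pow_mem (mem_zpowers a) r)
  have ha : a ∈ normalizer (zpowers a : Set G) := le_normalizer (mem_zpowers a)
  rw [← normalizer_eq_top_iff, eq_top_iff, ← hgen, closure_le]
  simp [Set.insert_subset_iff, ha, hb]

end Metacyclic

section Quotient

variable {G : Type*} [Group G] {a b : G} {r : ℕ} [(zpowers a).Normal]

theorem zpowers_mk_eq_top (hgen : closure {a, b} = ⊤) :
    zpowers (b : G ⧸ zpowers a) = ⊤ := by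
  have hle : closure {a, b} ≤ (zpowers (b : G ⧸ zpowers a)).comap (QuotientGroup.mk' _) := by
    rw [closure_le, Set.insert_subset_iff, Set.singleton_subset_iff]
    refine ⟨?_, mem_zpowers _⟩
    rw [SetLike.mem_coe, mem_comap, QuotientGroup.mk'_apply,
      (QuotientGroup.eq_one_iff a).mpr (mem_zpowers a)]
    exact one_mem _
  refine (eq_top_iff' _).mpr fun x => ?_
  obtain ⟨g, rfl⟩ := QuotientGroup.mk_surjective x
  exact hle (hgen ▸ mem_top g)

theorem orderOf_mk_mul_orderOf (hgen : closure {a, b} = ⊤) :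
    orderOf (b : G ⧸ zpowers a) * orderOf a = Nat.card G := by
  rw [← Nat.card_zpowers, ← Nat.card_zpowers a, zpowers_mk_eq_top hgen, card_top,
    ← card_eq_card_quotient_mul_card_subgroup]

theorem ordMod_orderOf_dvd_orderOf_mk (hrel : b⁻¹ * a * b = a ^ r) :
    ordMod (orderOf a) r ∣ orderOf (b : G ⧸ zpowers a) := by
  refine ordMod_orderOf_dvd_of_commute hrel (mem_zpowers a) ?_
  have hbN : b ^ orderOf (b : G ⧸ zpowers a) ∈ zpowers a := by
    rw [← QuotientGroup.eq_one_iff, QuotientGroup.mk_pow, pow_orderOf_eq_one]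
  obtain ⟨k, hk⟩ := mem_zpowers_iff.mp hbN
  exact hk ▸ Commute.self_zpow a k

theorem isMulCommutative_centralizer_zpowers (hgen : closure {a, b} = ⊤) :
    IsMulCommutative (centralizer (zpowers a : Set G)) := by
  have : IsCyclic (G ⧸ zpowers a) :=
    isCyclic_iff_exists_zpowers_eq_top.mpr ⟨_, zpowers_mk_eq_top hgen⟩
  refine ((QuotientGroup.mk' (zpowers a)).comp (centralizer _).subtype)
    |>.isMulCommutative_of_isCyclic_of_ker_le_center fun x hx => mem_center_iff.mpr fun y => ?_
  have hxA : (x : G) ∈ zpowers a := by simpa using hx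
  exact Subtype.ext (mem_centralizer_iff.mp y.2 x hxA).symm

theorem centralizer_centralizer_zpowers (hgen : closure {a, b} = ⊤) :
    centralizer (centralizer (zpowers a : Set G) : Set G) = centralizer (zpowers a : Set G) := by
  have := isMulCommutative_centralizer_zpowers hgen
  exact le_antisymm (centralizer_le (le_centralizer_iff_isMulCommutative.mpr inferInstance))
    (le_centralizer_iff_isMulCommutative.mpr this)

variable [Finite G]

theorem exists_pow_mul_mem_zpowers (hgen : closure {a, b} = ⊤) (x : G) :
    ∃ j : ℕ, ∃ y ∈ zpowers a, x = b ^ j * y := by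
  obtain ⟨j, hj⟩ := mem_powers_iff_mem_zpowers.mpr ((zpowers_mk_eq_top hgen).symm ▸ mem_top
    (x : G ⧸ zpowers a))
  refine ⟨j, (b ^ j)⁻¹ * x, QuotientGroup.eq.mp ?_, by group⟩
  rw [QuotientGroup.mk_pow]
  exact hj

theorem mk_mem_zpowers_pow_ordMod (hrel : b⁻¹ * a * b = a ^ r) (hgen : closure {a, b} = ⊤)
    {K : Subgroup G} (hK : K ≤ zpowers a) {x : G} (hx : x ∈ centralizer (K : Set G)) :
    (x : G ⧸ zpowers a) ∈ zpowers ((b : G ⧸ zpowers a) ^ ordMod (Nat.card K) r) := by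
  have := isCyclic_of_le hK
  obtain ⟨z, hz⟩ := IsCyclic.exists_ofOrder_eq_natCard (α := K)
  obtain ⟨j, y, hy, rfl⟩ := exists_pow_mul_mem_zpowers hgen x
  have hzA : (z : G) ∈ zpowers a := hK z.2
  have hzy : Commute (z : G) y := by
    obtain ⟨k, hk⟩ := mem_zpowers_iff.mp hzA
    obtain ⟨l, rfl⟩ := mem_zpowers_iff.mp hy
    exact hk ▸ Commute.zpow_zpow_self a k l
  have hzb : Commute (z : G) (b ^ j) := by
    have hzx : Commute (z : G) (b ^ j * y) := mem_centralizer_iff.mp hx z z.2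
    simpa using hzx.mul_right hzy.inv_right
  obtain ⟨c, hc⟩ := ordMod_orderOf_dvd_of_commute hrel hzA hzb
  rw [orderOf_coe, hz] at hc
  rw [QuotientGroup.mk_mul, (QuotientGroup.eq_one_iff y).mpr hy, mul_one, QuotientGroup.mk_pow,
    hc, pow_mul]
  exact pow_mem (mem_zpowers _) c

theorem card_map_mk_mul_ordMod_le (hrel : b⁻¹ * a * b = a ^ r) (hgen : closure {a, b} = ⊤)
    {K H : Subgroup G} (hK : K ≤ zpowers a) (hH : H ≤ centralizer (K : Set G)) :
    Nat.card (H.map (QuotientGroup.mk' (zpowers a))) * ordMod (Nat.card K) r ≤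
      orderOf (b : G ⧸ zpowers a) := by
  set t := ordMod (Nat.card K) r
  have ht : t ∣ orderOf (b : G ⧸ zpowers a) := by
    refine (ordMod_dvd_ordMod r ?_).trans (ordMod_orderOf_dvd_orderOf_mk hrel)
    simpa using card_dvd_of_le hK
  have ht0 : t ≠ 0 := ne_zero_of_dvd_ne_zero (orderOf_pos _).ne' ht
  have hmap : H.map (QuotientGroup.mk' (zpowers a)) ≤ zpowers ((b : G ⧸ zpowers a) ^ t) :=
    map_le_iff_le_comap.mpr fun x hx => mk_mem_zpowers_pow_ordMod hrel hgen hK (hH hx)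
  calc Nat.card (H.map (QuotientGroup.mk' (zpowers a))) * t
      ≤ orderOf ((b : G ⧸ zpowers a) ^ t) * t := by
        rw [← Nat.card_zpowers]; exact Nat.mul_le_mul_right t (card_le_of_le hmap)
    _ = orderOf (b : G ⧸ zpowers a) := by
        rw [orderOf_pow_of_dvd ht0 ht, Nat.div_mul_cancel ht]

theorem map_mk_centralizer_zpowers (hrel : b⁻¹ * a * b = a ^ r) (hgen : closure {a, b} = ⊤) :
    (centralizer (zpowers a : Set G)).map (QuotientGroup.mk' (zpowers a)) =
      zpowers ((b : G ⧸ zpowers a) ^ ordMod (orderOf a) r) := by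
  refine le_antisymm (map_le_iff_le_comap.mpr fun x hx => ?_) (zpowers_le.mpr ?_)
  · simpa using mk_mem_zpowers_pow_ordMod hrel hgen le_rfl hx
  refine ⟨b ^ ordMod (orderOf a) r, mem_centralizer_iff.mpr fun z hz => ?_, rfl⟩
  obtain ⟨k, rfl⟩ := mem_zpowers_iff.mp hz
  exact ((commute_pow_ordMod hrel).zpow_left k).eq

theorem ordMod_orderOf_pos (hrel : b⁻¹ * a * b = a ^ r) : 0 < ordMod (orderOf a) r :=
  Nat.pos_of_dvd_of_pos (ordMod_orderOf_dvd_orderOf_mk hrel) (orderOf_pos _)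

theorem card_centralizer_zpowers_mul_ordMod (hrel : b⁻¹ * a * b = a ^ r)
    (hgen : closure {a, b} = ⊤) :
    Nat.card (centralizer (zpowers a : Set G)) * ordMod (orderOf a) r =
      orderOf a * orderOf (b : G ⧸ zpowers a) := by
  have hd := ordMod_orderOf_dvd_orderOf_mk hrel
  have hinf :
      centralizer (zpowers a : Set G) ⊓ (QuotientGroup.mk' (zpowers a)).ker = zpowers a := by
    rw [QuotientGroup.ker_mk']
    exact inf_eq_right.mpr (le_centralizer_iff_isMulCommutative.mpr inferInstance)
  rw [card_eq_card_map_mul_card_inf_ker (QuotientGroup.mk' (zpowers a)), hinf,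
    map_mk_centralizer_zpowers hrel hgen, Nat.card_zpowers, Nat.card_zpowers,
    orderOf_pow_of_dvd (ordMod_orderOf_pos hrel).ne' hd, mul_comm _ (orderOf a), mul_assoc,
    Nat.div_mul_cancel hd]

theorem chermakDelgadoMeasure_centralizer_zpowers_mul_sq (hrel : b⁻¹ * a * b = a ^ r)
    (hgen : closure {a, b} = ⊤) :
    chermakDelgadoMeasure (centralizer (zpowers a : Set G)) * ordMod (orderOf a) r ^ 2 =
      (orderOf a * orderOf (b : G ⧸ zpowers a)) ^ 2 := by
  rw [chermakDelgadoMeasure, centralizer_centralizer_zpowers hgen,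
    ← card_centralizer_zpowers_mul_ordMod hrel hgen]
  ring

theorem chermakDelgadoMeasure_mul_sq_le (hrel : b⁻¹ * a * b = a ^ r)
    (hgen : closure {a, b} = ⊤) (H : Subgroup G) :
    chermakDelgadoMeasure H * ordMod (orderOf a) r ^ 2 ≤
      (orderOf a * orderOf (b : G ⧸ zpowers a)) ^ 2 := by
  set C := centralizer (H : Set G)
  set π := QuotientGroup.mk' (zpowers a)
  set m := orderOf a
  set n := orderOf (b : G ⧸ zpowers a)
  set d := ordMod m r
  set m₁ := Nat.card (H ⊓ zpowers a : Subgroup G)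
  set m₂ := Nat.card (C ⊓ zpowers a : Subgroup G)
  have hker : π.ker = zpowers a := QuotientGroup.ker_mk' _
  have hH : Nat.card H = Nat.card (H.map π) * m₁ := by
    rw [card_eq_card_map_mul_card_inf_ker π H, hker]
  have hC : Nat.card C = Nat.card (C.map π) * m₂ := by
    rw [card_eq_card_map_mul_card_inf_ker π C, hker]
  have hHn : Nat.card (H.map π) * ordMod m₂ r ≤ n :=
    card_map_mk_mul_ordMod_le hrel hgen inf_le_right (le_centralizer_iff.mpr inf_le_left)
  have hCn : Nat.card (C.map π) * ordMod m₁ r ≤ n :=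
    card_map_mk_mul_ordMod_le hrel hgen inf_le_right (centralizer_le inf_le_left)
  have : NeZero m := ⟨(orderOf_pos a).ne'⟩
  have hr : IsUnit (r : ZMod m) := (orderOf_pos_iff.mp (ordMod_orderOf_pos hrel)).isUnit
  have hdvd (K : Subgroup G) : Nat.card (K ⊓ zpowers a : Subgroup G) ∣ m := by
    have := card_dvd_of_le (inf_le_right : K ⊓ zpowers a ≤ zpowers a)
    rwa [Nat.card_zpowers] at this
  have hm₁ : d * m₁ ≤ ordMod m₁ r * m := ordMod_mul_le_ordMod_mul (hdvd H) hr
  have hm₂ : d * m₂ ≤ ordMod m₂ r * m := ordMod_mul_le_ordMod_mul (hdvd C) hr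
  rw [chermakDelgadoMeasure, hH, hC]
  calc Nat.card (H.map π) * m₁ * (Nat.card (C.map π) * m₂) * d ^ 2
      = d * m₁ * (d * m₂) * (Nat.card (H.map π) * Nat.card (C.map π)) := by ring
    _ ≤ ordMod m₁ r * m * (ordMod m₂ r * m) * (Nat.card (H.map π) * Nat.card (C.map π)) := by
        gcongr
    _ = m ^ 2 * (Nat.card (H.map π) * ordMod m₂ r * (Nat.card (C.map π) * ordMod m₁ r)) := by
        ring
    _ ≤ m ^ 2 * (n * n) := by gcongr
    _ = (m * n) ^ 2 := by ring

end Quotient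

theorem stmt_10_general {G : Type*} [Group G] [Finite G]
    (m n r : ℕ)
    (a b : G) (ha : orderOf a = m)
    (hrel : b⁻¹ * a * b = a ^ r)
    (hgen : Subgroup.closure {a, b} = ⊤)
    (hcard : Nat.card G = m * n) :
    IsGreatest {k | ∃ H : Subgroup G, chermakDelgadoMeasure H = k}
      (m ^ 2 * n ^ 2 / ordMod m r ^ 2) := by
  have := zpowers_normal hrel hgen
  have hn : orderOf (b : G ⧸ zpowers a) = n := by
    have h := orderOf_mk_mul_orderOf hgen
    rw [hcard, ← ha, mul_comm (orderOf a)] at h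
    exact Nat.eq_of_mul_eq_mul_right (orderOf_pos a) h
  subst ha hn
  have hd : 0 < ordMod (orderOf a) r ^ 2 := pow_pos (ordMod_orderOf_pos hrel) 2
  rw [← mul_pow]
  refine ⟨⟨_, Nat.eq_div_of_mul_eq_left hd.ne'
    (chermakDelgadoMeasure_centralizer_zpowers_mul_sq hrel hgen)⟩, ?_⟩
  rintro _ ⟨H, rfl⟩
  exact (Nat.le_div_iff_mul_le hd).mpr (chermakDelgadoMeasure_mul_sq_le hrel hgen H)

/-- The maximal Chermak–Delgado measure of `ZM(m,n,r)` is `m²n²/d²`, `d = ord_m(r)`. -/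
theorem stmt_10 {G : Type*} [Group G] [Finite G]
    (m n r : ℕ) (hm : 0 < m) (hn : 0 < n)
    (hgcd1 : Nat.gcd m n = 1) (hgcd2 : Nat.gcd m (r - 1) = 1)
    (hrn : r ^ n % m = 1 % m)
    (a b : G) (ha : orderOf a = m) (hb : orderOf b = n)
    (hrel : b⁻¹ * a * b = a ^ r)
    (hgen : Subgroup.closure {a, b} = ⊤)
    (hcard : Nat.card G = m * n) :
    IsGreatest {k | ∃ H : Subgroup G, chermakDelgadoMeasure H = k}
      (m ^ 2 * n ^ 2 / ordMod m r ^ 2) :=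
  stmt_10_general m n r a b ha hrel hgen hcard
end

section
/- For odd m ≥ 3, the maximal Chermak-Delgado measure of the dihedral group D_{2m} of order 2m is m², and the Chermak-Delgado lattice of D_{2m} consists only of the cyclic rotation subgroup ⟨a⟩ of order m. -/
open DihedralGroup Subgroup

section ChermakDelgado

variable {G : Type*} [Group G]

theorem chermakDelgadoMeasure_bot : chermakDelgadoMeasure (⊥ : Subgroup G) = Nat.card G := by
  rw [chermakDelgadoMeasure, coe_bot, centralizer_eq_top_iff_subset.2 (by simp), card_bot,
    card_top, one_mul]

theorem chermakDelgadoMeasure_le_max_of_card_centralizer_eq_two [Finite G] {K : Subgroup G}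
    {g : G} (hg : g ∈ K) (hC : Nat.card (centralizer {g}) = 2) :
    chermakDelgadoMeasure K ≤ max (Nat.card G) 4 := by
  have hle : centralizer (K : Set G) ≤ centralizer {g} := centralizer_le (by simpa using hg)
  rcases (Nat.dvd_prime Nat.prime_two).1 (hC ▸ card_dvd_of_le hle) with h1 | h2
  · rw [chermakDelgadoMeasure, h1, mul_one]
    exact le_max_of_le_left K.card_le_card_group
  · have hCK : centralizer (K : Set G) = centralizer {g} :=
      eq_of_le_of_card_ge hle (by rw [hC, h2])
    have hgK : g ∈ centralizer (K : Set G) := hCK ▸ mem_centralizer_singleton_iff.2 rfl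
    have hKC : K ≤ centralizer {g} := fun x hx =>
      mem_centralizer_singleton_iff.2 (mem_centralizer_iff.1 hgK x hx)
    calc chermakDelgadoMeasure K ≤ 2 * 2 := by
          rw [chermakDelgadoMeasure, h2]
          exact Nat.mul_le_mul_right 2 (hC ▸ card_le_of_le hKC)
      _ ≤ max (Nat.card G) 4 := le_max_right _ _

end ChermakDelgado

namespace DihedralGroup

variable {n : ℕ}

theorem mem_zpowers_r_one_iff {x : DihedralGroup n} : x ∈ zpowers (r 1) ↔ ∃ i, x = r i := by
  rw [mem_zpowers_iff]
  refine ⟨fun ⟨k, hk⟩ => ⟨k, by rw [← hk, r_one_zpow]⟩, ?_⟩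
  rintro ⟨i, rfl⟩
  exact ⟨ZMod.cast i, by rw [r_one_zpow, ZMod.intCast_zmod_cast]⟩

theorem card_zpowers_r_one : Nat.card (zpowers (r 1 : DihedralGroup n)) = n := by
  rw [Nat.card_zpowers, orderOf_r_one]

theorem r_mem_centralizer_sr_iff (hn : Odd n) {i j : ZMod n} :
    r i ∈ centralizer {sr j} ↔ i = 0 := by
  rw [mem_centralizer_singleton_iff, sr_mul_r, r_mul_sr, sr.injEq, sub_eq_add_neg, add_right_inj,
    neg_eq_iff_add_eq_zero, ZMod.add_self_eq_zero_iff_eq_zero hn]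

theorem sr_mem_centralizer_sr_iff (hn : Odd n) {i j : ZMod n} :
    sr i ∈ centralizer {sr j} ↔ i = j := by
  rw [mem_centralizer_singleton_iff, sr_mul_sr, sr_mul_sr, r.injEq, ← neg_sub,
    neg_eq_iff_add_eq_zero, ZMod.add_self_eq_zero_iff_eq_zero hn, sub_eq_zero, eq_comm]

theorem centralizer_sr (hn : Odd n) (j : ZMod n) : centralizer {sr j} = zpowers (sr j) := by
  refine le_antisymm (fun x hx => ?_) (zpowers_le.2 (mem_centralizer_singleton_iff.2 rfl))
  cases x with
  | r i => rw [(r_mem_centralizer_sr_iff hn).1 hx, r_zero]; exact one_mem _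
  | sr i => rw [(sr_mem_centralizer_sr_iff hn).1 hx]; exact mem_zpowers _

theorem card_centralizer_sr (hn : Odd n) (j : ZMod n) : Nat.card (centralizer {sr j}) = 2 := by
  rw [centralizer_sr hn, Nat.card_zpowers, orderOf_sr]

theorem centralizer_eq_zpowers_r_one (hn : Odd n) {K : Subgroup (DihedralGroup n)}
    (hKR : K ≤ zpowers (r 1)) (hK : K ≠ ⊥) :
    centralizer (K : Set (DihedralGroup n)) = zpowers (r 1) := by
  obtain ⟨x, hxK, hx1⟩ := K.bot_or_exists_ne_one.resolve_left hK
  obtain ⟨i, rfl⟩ := mem_zpowers_r_one_iff.1 (hKR hxK)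
  refine le_antisymm (fun y hy => ?_)
    ((le_centralizer (H := zpowers (r 1))).trans (centralizer_le hKR))
  cases y with
  | r j => exact mem_zpowers_r_one_iff.2 ⟨j, rfl⟩
  | sr j =>
    have hi : i = 0 := (r_mem_centralizer_sr_iff hn).1
      (mem_centralizer_singleton_iff.2 (mem_centralizer_iff.1 hy _ hxK))
    exact absurd (by rw [hi, r_zero]) hx1

theorem chermakDelgadoMeasure_of_le_zpowers_r_one (hn : Odd n) {K : Subgroup (DihedralGroup n)}
    (hKR : K ≤ zpowers (r 1)) (hK : K ≠ ⊥) : chermakDelgadoMeasure K = Nat.card K * n := by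
  rw [chermakDelgadoMeasure, centralizer_eq_zpowers_r_one hn hKR hK, card_zpowers_r_one]

theorem chermakDelgadoMeasure_zpowers_r_one (hn : Odd n) (hn1 : n ≠ 1) :
    chermakDelgadoMeasure (zpowers (r 1 : DihedralGroup n)) = n ^ 2 := by
  have hr1 : r 1 ≠ (1 : DihedralGroup n) := fun h =>
    hn1 (by rw [← orderOf_r_one (n := n), h, orderOf_one])
  rw [chermakDelgadoMeasure_of_le_zpowers_r_one hn le_rfl (zpowers_eq_bot.not.2 hr1),
    card_zpowers_r_one, sq]

theorem chermakDelgadoMeasure_lt_sq (hn : Odd n) (h3 : 3 ≤ n) {K : Subgroup (DihedralGroup n)}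
    (hK : K ≠ zpowers (r 1)) : chermakDelgadoMeasure K < n ^ 2 := by
  have : NeZero n := ⟨by omega⟩
  by_cases hKR : K ≤ zpowers (r 1)
  · rcases eq_or_ne K ⊥ with rfl | hbot
    · rw [chermakDelgadoMeasure_bot, nat_card]
      nlinarith
    · have hlt : Nat.card K < Nat.card (zpowers (r 1 : DihedralGroup n)) :=
        (card_le_of_le hKR).lt_of_ne fun h => hK (eq_of_le_of_card_ge hKR h.ge)
      rw [card_zpowers_r_one] at hlt
      rw [chermakDelgadoMeasure_of_le_zpowers_r_one hn hKR hbot, sq]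
      exact Nat.mul_lt_mul_of_pos_right hlt (by omega)
  · obtain ⟨x, hxK, hxR⟩ := SetLike.not_le_iff_exists.1 hKR
    obtain ⟨j, rfl⟩ : ∃ j, x = sr j := by
      cases x with
      | r i => exact absurd (mem_zpowers_r_one_iff.2 ⟨i, rfl⟩) hxR
      | sr j => exact ⟨j, rfl⟩
    calc chermakDelgadoMeasure K ≤ max (Nat.card (DihedralGroup n)) 4 :=
          chermakDelgadoMeasure_le_max_of_card_centralizer_eq_two hxK (card_centralizer_sr hn j)
      _ < n ^ 2 := by
          rw [nat_card, max_lt_iff]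
          constructor <;> nlinarith

end DihedralGroup

/-- For odd `m ≥ 3`, `m(D_{2m}) = m²` and `CD(D_{2m}) = {⟨a⟩}`, the rotation subgroup. -/
theorem stmt_12 (m : ℕ) (hm : 3 ≤ m) (hodd : Odd m) :
    IsGreatest {k | ∃ H : Subgroup (DihedralGroup m), chermakDelgadoMeasure H = k} (m ^ 2) ∧
    {H : Subgroup (DihedralGroup m) |
        ∀ K : Subgroup (DihedralGroup m), chermakDelgadoMeasure K ≤ chermakDelgadoMeasure H} =
      {Subgroup.zpowers (DihedralGroup.r 1)} := by
  have hR := chermakDelgadoMeasure_zpowers_r_one hodd (by omega)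
  have hle (K : Subgroup (DihedralGroup m)) : chermakDelgadoMeasure K ≤ m ^ 2 := by
    rcases eq_or_ne K (zpowers (r 1)) with rfl | hK
    · exact hR.le
    · exact (chermakDelgadoMeasure_lt_sq hodd hm hK).le
  refine ⟨⟨⟨_, hR⟩, fun k ⟨H, hH⟩ => hH ▸ hle H⟩, Set.ext fun H => ⟨fun hH => ?_, ?_⟩⟩
  · by_contra hne
    exact (hR ▸ hH (zpowers (r 1))).not_gt (chermakDelgadoMeasure_lt_sq hodd hm hne)
  · rintro rfl K
    exact hR ▸ hle K
end

section
/- For k ≥ 2, the maximal Chermak-Delgado measure of the dihedral group D_{2^{k+1}} of order 2^{k+1} is 2^{2k}. -/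
open DihedralGroup Subgroup

section aux

variable {n : ℕ}

lemma r_inj : Function.Injective (DihedralGroup.r : ZMod n → DihedralGroup n) := by
  intro a b h; injection h

lemma sr_inj : Function.Injective (DihedralGroup.sr : ZMod n → DihedralGroup n) := by
  intro a b h; injection h

/-- The rotation subgroup of the dihedral group. -/
def rotSub (n : ℕ) : Subgroup (DihedralGroup n) where
  carrier := Set.range DihedralGroup.r
  mul_mem' := by rintro _ _ ⟨i, rfl⟩ ⟨j, rfl⟩; exact ⟨i + j, (r_mul_r i j).symm⟩
  one_mem' := ⟨0, rfl⟩
  inv_mem' := by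
    rintro _ ⟨i, rfl⟩
    refine ⟨-i, ?_⟩
    have : r (-i) * r i = 1 := by rw [r_mul_r, neg_add_cancel]; rfl
    exact (eq_inv_of_mul_eq_one_left this).symm

lemma two_ne_zero_zmod (k : ℕ) (hk : 2 ≤ k) : (2 : ZMod (2 ^ k)) ≠ 0 := by
  have : ((2 : ℕ) : ZMod (2 ^ k)) ≠ 0 := by
    intro h
    rw [ZMod.natCast_eq_zero_iff] at h
    have := Nat.le_of_dvd (by norm_num) h
    have h4 : 4 ≤ 2 ^ k := by
      calc 4 = 2 ^ 2 := by norm_num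
        _ ≤ 2 ^ k := Nat.pow_le_pow_right (by norm_num) hk
    omega
  simpa using this

lemma two_mul_eq_zero_zmod (k : ℕ) (hk : 1 ≤ k) (i : ZMod (2 ^ k)) (h : 2 * i = 0) :
    i = 0 ∨ i = ((2 ^ (k - 1) : ℕ) : ZMod (2 ^ k)) := by
  haveI : NeZero (2 ^ k) := ⟨pow_ne_zero _ two_ne_zero⟩
  have hi : ((i.val : ℕ) : ZMod (2 ^ k)) = i := ZMod.natCast_rightInverse i
  have h2 : ((2 * i.val : ℕ) : ZMod (2 ^ k)) = 0 := by push_cast [hi]; exact h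
  rw [ZMod.natCast_eq_zero_iff] at h2
  have hlt : i.val < 2 ^ k := ZMod.val_lt i
  have hpow : 2 ^ k = 2 * 2 ^ (k - 1) := by
    conv_lhs => rw [show k = 1 + (k - 1) by omega]
    rw [pow_add, pow_one]
  obtain ⟨m, hm⟩ : 2 ^ (k - 1) ∣ i.val := by
    obtain ⟨m, hm⟩ := h2
    refine ⟨m, ?_⟩
    have h3 : 2 * i.val = 2 * (2 ^ (k - 1) * m) := by rw [hm, hpow]; ring
    omega
  have hm2 : m = 0 ∨ m = 1 := by
    rcases Nat.lt_or_ge m 2 with h' | h'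
    · omega
    · exfalso; nlinarith [Nat.one_le_two_pow (n := k - 1)]
  rcases hm2 with rfl | rfl
  · left; rw [← hi]; simp [hm]
  · right; rw [← hi, hm, mul_one]

lemma card_sub_le {G : Type*} [Group G] (H : Subgroup G) {T : Set G}
    (hsub : (H : Set G) ⊆ T) (hT : T.Finite) : Nat.card H ≤ T.ncard := by
  rw [show Nat.card H = (H : Set G).ncard from Nat.card_coe_set_eq _]
  exact Set.ncard_le_ncard hsub hT

end aux

/-- For `k ≥ 2`, the maximal Chermak–Delgado measure of `D_{2^{k+1}}` is `2^{2k}`. -/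
theorem stmt_13 (k : ℕ) (hk : 2 ≤ k) :
    IsGreatest {c | ∃ H : Subgroup (DihedralGroup (2 ^ k)), chermakDelgadoMeasure H = c}
      (2 ^ (2 * k)) := by
  haveI : NeZero (2 ^ k) := ⟨pow_ne_zero _ two_ne_zero⟩
  set n := 2 ^ k with hn
  have h2 : (2 : ZMod n) ≠ 0 := two_ne_zero_zmod k hk
  set c : ZMod n := ((2 ^ (k - 1) : ℕ) : ZMod n) with hc
  have hclass : ∀ i : ZMod n, 2 * i = 0 → i = 0 ∨ i = c :=
    fun i h => two_mul_eq_zero_zmod k (by omega) i h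
  have hcardG : Nat.card (DihedralGroup n) = 2 * n := by
    rw [Nat.card_eq_fintype_card, DihedralGroup.card]
  have hcardR : ∀ S : Set (DihedralGroup n), S ⊆ Set.range DihedralGroup.r → S.ncard ≤ n := by
    intro S hS
    have : (Set.range (DihedralGroup.r : ZMod n → _)).ncard = n := by
      rw [← Nat.card_coe_set_eq, Nat.card_range_of_injective r_inj, Nat.card_zmod]
    exact le_trans (Set.ncard_le_ncard hS (Set.toFinite _)) this.le
  have hpair : ∀ a b : DihedralGroup n, ({a, b} : Set _).ncard ≤ 2 := by
    intro a b
    calc ({a, b} : Set _).ncard ≤ ({b} : Set _).ncard + 1 := Set.ncard_insert_le _ _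
      _ ≤ 2 := by rw [Set.ncard_singleton]
  have hquad : ∀ a b d e : DihedralGroup n, ({a, b, d, e} : Set _).ncard ≤ 4 := by
    intro a b d e
    calc ({a, b, d, e} : Set _).ncard ≤ ({b, d, e} : Set _).ncard + 1 := Set.ncard_insert_le _ _
      _ ≤ (({d, e} : Set _).ncard + 1) + 1 :=
          Nat.add_le_add_right (Set.ncard_insert_le _ _) 1
      _ ≤ 4 := by have := hpair d e; omega
  constructor
  · -- membership: the rotation subgroup
    refine ⟨rotSub n, ?_⟩
    have hCR : Subgroup.centralizer ((rotSub n : Set (DihedralGroup n))) = rotSub n := by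
      ext x
      rw [Subgroup.mem_centralizer_iff]
      constructor
      · intro hx
        cases x with
        | r i => exact ⟨i, rfl⟩
        | sr j =>
          exfalso
          have h := hx (r 1) ⟨1, rfl⟩
          rw [r_mul_sr, sr_mul_r] at h
          have h' := sr_inj h
          apply h2
          have e : (2 : ZMod n) = (j + 1) - (j - 1) := by ring
          rw [e, ← h', sub_self]
      · rintro ⟨i, rfl⟩ g hg
        obtain ⟨j, rfl⟩ := hg
        rw [r_mul_r, r_mul_r, add_comm]
    have hcard : Nat.card (rotSub n) = n := by
      have h1 : Nat.card (rotSub n) = Nat.card (Set.range (DihedralGroup.r : ZMod n → _)) := rfl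
      rw [h1, Nat.card_range_of_injective r_inj, Nat.card_zmod]
    show chermakDelgadoMeasure (rotSub n) = 2 ^ (2 * k)
    rw [chermakDelgadoMeasure, hCR, hcard, hn, two_mul, pow_add]
  · -- upper bound
    rintro x ⟨H, rfl⟩
    rw [chermakDelgadoMeasure]
    by_cases hrot : ∃ i : ZMod n, r i ∈ H ∧ 2 * i ≠ 0
    · obtain ⟨i, hiH, hi2⟩ := hrot
      have hCrot : (Subgroup.centralizer (H : Set (DihedralGroup n)) : Set (DihedralGroup n)) ⊆
          Set.range DihedralGroup.r := by
        intro y hy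
        rw [SetLike.mem_coe, Subgroup.mem_centralizer_iff] at hy
        cases y with
        | r m => exact ⟨m, rfl⟩
        | sr m =>
          exfalso
          have h := hy (r i) hiH
          rw [r_mul_sr, sr_mul_r] at h
          have h' := sr_inj h
          apply hi2
          have e : 2 * i = (m + i) - (m - i) := by ring
          rw [e, ← h', sub_self]
      have hC : Nat.card (Subgroup.centralizer (H : Set (DihedralGroup n))) ≤ n :=
        le_trans (card_sub_le _ hCrot (Set.toFinite _)) (hcardR _ subset_rfl)
      by_cases hrefl : ∃ j : ZMod n, sr j ∈ H
      · obtain ⟨j, hjH⟩ := hrefl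
        have hC2 : (Subgroup.centralizer (H : Set (DihedralGroup n)) : Set (DihedralGroup n)) ⊆
            ({r 0, r c} : Set (DihedralGroup n)) := by
          intro y hy
          have hy' := hy
          rw [SetLike.mem_coe, Subgroup.mem_centralizer_iff] at hy'
          obtain ⟨m, rfl⟩ := hCrot hy
          have h := hy' (sr j) hjH
          rw [sr_mul_r, r_mul_sr] at h
          have h' := sr_inj h
          have h2m : 2 * m = 0 := by
            have e : 2 * m = (j + m) - (j - m) := by ring
            rw [e, h', sub_self]
          rcases hclass m h2m with rfl | rfl
          · left; rfl
          · right; rfl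
        have hCsz : Nat.card (Subgroup.centralizer (H : Set (DihedralGroup n))) ≤ 2 := by
          calc Nat.card (Subgroup.centralizer (H : Set (DihedralGroup n)))
              ≤ ({r 0, r c} : Set (DihedralGroup n)).ncard :=
                card_sub_le _ hC2 (Set.toFinite _)
            _ ≤ 2 := hpair _ _
        have hHsz : Nat.card H ≤ 2 * n := by
          calc Nat.card H ≤ (Set.univ : Set (DihedralGroup n)).ncard :=
                card_sub_le _ (Set.subset_univ _) (Set.toFinite _)
            _ = 2 * n := by rw [Set.ncard_univ, hcardG]
        calc Nat.card H * Nat.card (Subgroup.centralizer (H : Set (DihedralGroup n)))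
            ≤ (2 * n) * 2 := Nat.mul_le_mul hHsz hCsz
          _ = 2 ^ (k + 2) := by rw [hn]; ring
          _ ≤ 2 ^ (2 * k) := Nat.pow_le_pow_right (by norm_num) (by omega)
      · push_neg at hrefl
        have hHrot : (H : Set (DihedralGroup n)) ⊆ Set.range DihedralGroup.r := by
          intro y hy
          cases y with
          | r m => exact ⟨m, rfl⟩
          | sr m => exact absurd hy (hrefl m)
        have hHsz : Nat.card H ≤ n :=
          le_trans (card_sub_le _ hHrot (Set.toFinite _)) (hcardR _ subset_rfl)
        calc Nat.card H * Nat.card (Subgroup.centralizer (H : Set (DihedralGroup n)))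
            ≤ n * n := Nat.mul_le_mul hHsz hC
          _ = 2 ^ (2 * k) := by rw [hn, two_mul, pow_add]
    · push_neg at hrot
      by_cases hrefl : ∃ j : ZMod n, sr j ∈ H
      · obtain ⟨j, hjH⟩ := hrefl
        have memquad : ∀ m : ZMod n, 2 * (m - j) = 0 →
            (sr m : DihedralGroup n) ∈ ({r 0, r c, sr j, sr (j + c)} : Set (DihedralGroup n)) := by
          intro m hm
          rcases hclass (m - j) hm with h | h
          · right; right; left
            rw [sub_eq_zero.mp h]
          · right; right; right
            rw [sub_eq_iff_eq_add.mp h, add_comm]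
            exact rfl
        have hHquad : (H : Set (DihedralGroup n)) ⊆
            ({r 0, r c, sr j, sr (j + c)} : Set (DihedralGroup n)) := by
          intro y hy
          cases y with
          | r i =>
            rcases hclass i (hrot i hy) with rfl | rfl
            · left; rfl
            · right; left; rfl
          | sr m =>
            apply memquad
            have hprod : sr j * sr m ∈ H := mul_mem hjH hy
            rw [sr_mul_sr] at hprod
            exact hrot _ hprod
        have hCquad : (Subgroup.centralizer (H : Set (DihedralGroup n)) :
            Set (DihedralGroup n)) ⊆
            ({r 0, r c, sr j, sr (j + c)} : Set (DihedralGroup n)) := by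
          intro y hy
          rw [SetLike.mem_coe, Subgroup.mem_centralizer_iff] at hy
          have h := hy (sr j) hjH
          cases y with
          | r m =>
            rw [sr_mul_r, r_mul_sr] at h
            have h' := sr_inj h
            have h2m : 2 * m = 0 := by
              have e : 2 * m = (j + m) - (j - m) := by ring
              rw [e, h', sub_self]
            rcases hclass m h2m with rfl | rfl
            · left; rfl
            · right; left; rfl
          | sr m =>
            rw [sr_mul_sr, sr_mul_sr] at h
            have h' := r_inj h
            apply memquad
            have e : 2 * (m - j) = (m - j) - (j - m) := by ring
            rw [e, h', sub_self]
        have hHsz : Nat.card H ≤ 4 :=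
          le_trans (card_sub_le _ hHquad (Set.toFinite _)) (hquad _ _ _ _)
        have hCsz : Nat.card (Subgroup.centralizer (H : Set (DihedralGroup n))) ≤ 4 :=
          le_trans (card_sub_le _ hCquad (Set.toFinite _)) (hquad _ _ _ _)
        calc Nat.card H * Nat.card (Subgroup.centralizer (H : Set (DihedralGroup n)))
            ≤ 4 * 4 := Nat.mul_le_mul hHsz hCsz
          _ = 2 ^ 4 := by norm_num
          _ ≤ 2 ^ (2 * k) := Nat.pow_le_pow_right (by norm_num) (by omega)
      · push_neg at hrefl
        have hHsub : (H : Set (DihedralGroup n)) ⊆ ({r 0, r c} : Set (DihedralGroup n)) := by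
          intro y hy
          cases y with
          | r i =>
            rcases hclass i (hrot i hy) with rfl | rfl
            · left; rfl
            · right; rfl
          | sr m => exact absurd hy (hrefl m)
        have hHsz : Nat.card H ≤ 2 :=
          le_trans (card_sub_le _ hHsub (Set.toFinite _)) (hpair _ _)
        have hCsz : Nat.card (Subgroup.centralizer (H : Set (DihedralGroup n))) ≤ 2 * n := by
          calc Nat.card (Subgroup.centralizer (H : Set (DihedralGroup n)))
              ≤ (Set.univ : Set (DihedralGroup n)).ncard :=
                card_sub_le _ (Set.subset_univ _) (Set.toFinite _)
            _ = 2 * n := by rw [Set.ncard_univ, hcardG]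
        calc Nat.card H * Nat.card (Subgroup.centralizer (H : Set (DihedralGroup n)))
            ≤ 2 * (2 * n) := Nat.mul_le_mul hHsz hCsz
          _ = 2 ^ (k + 2) := by rw [hn]; ring
          _ ≤ 2 ^ (2 * k) := Nat.pow_le_pow_right (by norm_num) (by omega)
end
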